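/- For every d ≥ 3 and n ≥ 3, the full cyclic transversal polytope is strictly contained in the set cut out of the transversal polytope by all lifted odd-set inequalities: CTP[d,n] ⊊ { x ∈ TP[d,n] : x satisfies the LOS inequality associated with η and I for every nonzero η ∈ 𝔽₂^d and every I ⊆ [n] of odd cardinality }. -/

import Mathlib

open scoped Classical

/-- The field `𝔽₂^d`, represented as functions `Fin d → ZMod 2`. -/
abbrev F2 (d : ℕ) : Type := Fin d → ZMod 2

/-- A cyclic transversal of a block configuration `B`. -/
def IsCyclicTransversal {d n : ℕ} (B : Fin n → Set (F2 d)) (ξ : Fin n → F2 d) : Prop :=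
  (∀ i, ξ i ∈ B i) ∧ (∑ i, ξ i) = 0

/-- The incidence vector of a transversal. -/
noncomputable def incVec {d n : ℕ} (ξ : Fin n → F2 d) : Fin n → F2 d → ℝ :=
  fun i ω => if ξ i = ω then 1 else 0

/-- The cyclic transversal polytope of a block configuration. -/
noncomputable def CTP {d n : ℕ} (B : Fin n → Set (F2 d)) : Set (Fin n → F2 d → ℝ) :=
  convexHull ℝ (incVec '' { ξ | IsCyclicTransversal B ξ })

/-- The transversal polytope of a block configuration. -/
def TP {d n : ℕ} (B : Fin n → Set (F2 d)) : Set (Fin n → F2 d → ℝ) :=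
  { x | (∀ i ω, 0 ≤ x i ω) ∧ (∀ i ω, ω ∉ B i → x i ω = 0) ∧ ∀ i, (∑ ω : F2 d, x i ω) = 1 }

/-- The size of a block configuration. -/
noncomputable def blockSize {d n : ℕ} (B : Fin n → Set (F2 d)) : ℕ := ∑ i, (B i).ncard

/-- The rank of a block configuration. -/
noncomputable def blockRank {d n : ℕ} (B : Fin n → Set (F2 d)) : ℕ :=
  Module.finrank (ZMod 2) (Submodule.span (ZMod 2) (⋃ i, B i))

/-- Two sets of real vectors are affinely isomorphic. -/
def AffIso {α β : Type*} [AddCommGroup α] [Module ℝ α] [AddCommGroup β] [Module ℝ β]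
    (P : Set α) (Q : Set β) : Prop :=
  ∃ f : α →ᵃ[ℝ] β, Set.InjOn f P ∧ f '' P = Q

/-- The left-hand side of the lifted odd-set (LOS) inequality associated with `η` and `I`. -/
noncomputable def losLHS {d n : ℕ} (B : Fin n → Set (F2 d)) (η : F2 d) (I : Finset (Fin n))
    (x : Fin n → F2 d → ℝ) : ℝ :=
  (∑ i ∈ I, ∑ ω ∈ Finset.univ.filter (fun ω : F2 d => ω ∈ B i ∧ (∑ j, η j * ω j) = 0), x i ω) +
  (∑ i ∈ Iᶜ, ∑ ω ∈ Finset.univ.filter (fun ω : F2 d => ω ∈ B i ∧ (∑ j, η j * ω j) = 1), x i ω)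

/-!
Every LOS inequality is valid on `CTP`: for a cyclic transversal `ξ` the bits `η · ξ(i)` sum
to `0`, so they cannot be `1` exactly on the odd set `I`, and then one of the indicator terms
on the left-hand side equals `1`.

For strictness, take the average of four transversals whose rows `0, 1, 2` live in the first
three coordinates, are given by the columns of `gapTable`, and whose other rows are `0`. A finite
check in `𝔽₂³` shows that this point satisfies every LOS inequality. It violates
`x₀(Sᶜ) + x₂(S) + ∑_{i ≥ 3} x_i(𝔽₂^d ∖ {0}) ≥ x₁(0)`, where `S` contains the entries of row `0`
and none of row `2`; this inequality is valid on `CTP` because a cyclic transversal that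
vanishes in row `1` and in all rows `i ≥ 3` has `ξ(0) = ξ(2)`.
-/

open Finset

section General

variable {d n : ℕ}

def pairing (f : Fin n → F2 d → ℝ) : (Fin n → F2 d → ℝ) →ₗ[ℝ] ℝ where
  toFun x := ∑ i, ∑ ω, f i ω * x i ω
  map_add' x y := by simp only [Pi.add_apply, mul_add, sum_add_distrib]
  map_smul' c x := by
    simp only [Pi.smul_apply, smul_eq_mul, mul_sum, RingHom.id_apply, mul_left_comm]

lemma pairing_apply (f x : Fin n → F2 d → ℝ) : pairing f x = ∑ i, ∑ ω, f i ω * x i ω := rfl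

lemma pairing_incVec (f : Fin n → F2 d → ℝ) (ξ : Fin n → F2 d) :
    pairing f (incVec ξ) = ∑ i, f i (ξ i) := by
  simp [pairing_apply, incVec]

lemma CTP_subset_halfSpace {B : Fin n → Set (F2 d)} {f : Fin n → F2 d → ℝ} {c : ℝ}
    (hf : ∀ ξ, IsCyclicTransversal B ξ → c ≤ ∑ i, f i (ξ i)) :
    CTP B ⊆ {x | c ≤ pairing f x} := by
  refine convexHull_min ?_ (convex_halfSpace_ge (pairing f).isLinear c)
  rintro _ ⟨ξ, hξ, rfl⟩
  simpa [pairing_incVec] using hf ξ hξ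

lemma incVec_mem_TP {B : Fin n → Set (F2 d)} {ξ : Fin n → F2 d} (hξ : ∀ i, ξ i ∈ B i) :
    incVec ξ ∈ TP B := by
  refine ⟨fun i ω => ?_, fun i ω hω => ?_, fun i => by simp [incVec]⟩
  · unfold incVec; positivity
  · exact if_neg fun h : ξ i = ω => hω (h ▸ hξ i)

lemma convex_TP (B : Fin n → Set (F2 d)) : Convex ℝ (TP B) := by
  rintro x ⟨hx₀, hxB, hx₁⟩ y ⟨hy₀, hyB, hy₁⟩ a b ha hb hab
  refine ⟨fun i ω => ?_, fun i ω hω => ?_, fun i => ?_⟩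
  · simp only [Pi.add_apply, Pi.smul_apply, smul_eq_mul]
    have := hx₀ i ω; have := hy₀ i ω; positivity
  · simp [hxB i ω hω, hyB i ω hω]
  · simp [sum_add_distrib, ← mul_sum, hx₁ i, hy₁ i, hab]

lemma CTP_subset_TP (B : Fin n → Set (F2 d)) : CTP B ⊆ TP B :=
  convexHull_min (by rintro _ ⟨ξ, hξ, rfl⟩; exact incVec_mem_TP hξ.1) (convex_TP B)

noncomputable def losCoeff (B : Fin n → Set (F2 d)) (η : F2 d) (I : Finset (Fin n)) (i : Fin n)
    (ω : F2 d) : ℝ :=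
  if ω ∈ B i ∧ η ⬝ᵥ ω = (if i ∈ I then 0 else 1) then 1 else 0

lemma losCoeff_nonneg {B : Fin n → Set (F2 d)} {η : F2 d} {I : Finset (Fin n)} {i : Fin n}
    {ω : F2 d} : 0 ≤ losCoeff B η I i ω := by
  unfold losCoeff; positivity

lemma losLHS_eq_pairing (B : Fin n → Set (F2 d)) (η : F2 d) (I : Finset (Fin n))
    (x : Fin n → F2 d → ℝ) : losLHS B η I x = pairing (losCoeff B η I) x := by
  rw [pairing_apply, ← sum_add_sum_compl I (fun i => (∑ ω, losCoeff B η I i ω * x i ω : ℝ))]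
  unfold losLHS
  congr 1 <;> refine sum_congr rfl fun i hi => ?_
  · simp [losCoeff, sum_filter, dotProduct, hi]
  · simp [losCoeff, sum_filter, dotProduct, mem_compl.1 hi]

lemma zmod_two_eq_add_one_of_ne {a b : ZMod 2} (h : a ≠ b) : a = b + 1 := by
  revert a b; decide

lemma exists_dotProduct_eq_ite {ξ : Fin n → F2 d} (hξ : ∑ i, ξ i = 0) (η : F2 d)
    {I : Finset (Fin n)} (hI : Odd I.card) : ∃ i, η ⬝ᵥ ξ i = if i ∈ I then 0 else 1 := by
  by_contra! h
  have hflip : ∀ i, η ⬝ᵥ ξ i = if i ∈ I then 1 else 0 := fun i => by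
    rw [zmod_two_eq_add_one_of_ne (h i)]
    split_ifs <;> rfl
  have : (0 : ZMod 2) = 1 := calc
    0 = η ⬝ᵥ ∑ i, ξ i := by rw [hξ, dotProduct_zero]
    _ = I.card := by simp [dotProduct_sum, hflip]
    _ = 1 := (ZMod.natCast_eq_one_iff_odd).2 hI
  exact zero_ne_one this

lemma one_le_sum_losCoeff {B : Fin n → Set (F2 d)} {ξ : Fin n → F2 d}
    (hξ : IsCyclicTransversal B ξ) (η : F2 d) {I : Finset (Fin n)} (hI : Odd I.card) :
    1 ≤ ∑ i, losCoeff B η I i (ξ i) := by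
  obtain ⟨i, hi⟩ := exists_dotProduct_eq_ite hξ.2 η hI
  calc (1 : ℝ) = losCoeff B η I i (ξ i) := by simp [losCoeff, hξ.1 i, hi]
    _ ≤ _ := single_le_sum (f := fun j => losCoeff B η I j (ξ j))
        (fun j _ => losCoeff_nonneg) (mem_univ i)

lemma CTP_subset_LOS (B : Fin n → Set (F2 d)) :
    CTP B ⊆ {x ∈ TP B | ∀ η I, Odd (I : Finset (Fin n)).card → 1 ≤ losLHS B η I x} :=
  fun x hx => ⟨CTP_subset_TP B hx, fun η I hI => by
    rw [losLHS_eq_pairing]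
    exact CTP_subset_halfSpace (fun ξ hξ => one_le_sum_losCoeff hξ η hI) hx⟩

end General

section Counterexample

def gapTable : Fin 3 → Fin 4 → F2 3 :=
  ![![![0, 0, 0], ![0, 1, 1], ![1, 0, 0], ![1, 0, 1]],
    ![![0, 0, 0], ![0, 0, 0], ![0, 1, 0], ![0, 1, 0]],
    ![![0, 0, 1], ![0, 1, 0], ![1, 1, 0], ![1, 1, 1]]]

lemma gapTable_los (η : F2 3) (J : Finset (Fin 3)) (hJ : Odd J.card) :
    4 ≤ ∑ k, ∑ i, if η ⬝ᵥ gapTable i k = (if i ∈ J then 0 else 1) then 1 else 0 := by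
  revert η J; decide

lemma gapTable_zero_ne_gapTable_two (k k' : Fin 4) : gapTable 0 k ≠ gapTable 2 k' := by
  revert k k'; decide

variable {d e m : ℕ}

lemma dotProduct_append_zero (η : F2 (3 + e)) (v : F2 3) :
    η ⬝ᵥ Fin.append v 0 = (fun i => η (Fin.castAdd e i)) ⬝ᵥ v := by
  simp [dotProduct, Fin.sum_univ_add]

lemma append_zero_eq_zero_iff (v : F2 3) : (Fin.append v 0 : F2 (3 + e)) = 0 ↔ v = 0 := by
  refine ⟨fun h => funext fun i => by simpa using congr_fun h (Fin.castAdd e i), ?_⟩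
  rintro rfl
  funext i
  refine Fin.addCases (fun i => ?_) (fun i => ?_) i <;> simp

def gapSample (e m : ℕ) (k : Fin 4) : Fin (3 + m) → F2 (3 + e) :=
  Fin.append (fun i => Fin.append (gapTable i k) 0) 0

noncomputable def gapPoint (e m : ℕ) : Fin (3 + m) → F2 (3 + e) → ℝ :=
  ∑ k, (4 : ℝ)⁻¹ • incVec (gapSample e m k)

lemma pairing_gapPoint (f : Fin (3 + m) → F2 (3 + e) → ℝ) :
    pairing f (gapPoint e m) = ∑ k, (4 : ℝ)⁻¹ * ∑ i, f i (gapSample e m k i) := by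
  simp [gapPoint, pairing_incVec]

lemma gapPoint_mem_TP : gapPoint e m ∈ TP (fun _ => Set.univ) :=
  (convex_TP _).sum_mem (fun _ _ => by positivity) (by simp)
    fun k _ => incVec_mem_TP fun i => Set.mem_univ _

lemma one_le_losLHS_gapPoint (η : F2 (3 + e)) {I : Finset (Fin (3 + m))} (hI : Odd I.card) :
    1 ≤ losLHS (fun _ => Set.univ) η I (gapPoint e m) := by
  rw [losLHS_eq_pairing, pairing_gapPoint, ← mul_sum]
  suffices h : 4 ≤ ∑ k, ∑ i, losCoeff (fun _ => Set.univ) η I i (gapSample e m k i) by linarith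
  by_cases hfar : ∃ j, Fin.natAdd 3 j ∈ I
  · obtain ⟨j, hj⟩ := hfar
    calc (4 : ℝ) = ∑ _k : Fin 4, 1 := by simp
      _ ≤ _ := sum_le_sum fun k _ => ?_
    calc 1 = losCoeff _ η I (Fin.natAdd 3 j) (gapSample e m k (Fin.natAdd 3 j)) := by
          simp [losCoeff, gapSample, hj]
      _ ≤ _ := single_le_sum (f := fun i => losCoeff _ η I i (gapSample e m k i))
          (fun i _ => losCoeff_nonneg) (mem_univ _)
  · set J := univ.filter fun i : Fin 3 => Fin.castAdd m i ∈ I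
    have hIJ : I = J.map (Fin.castAddEmb m) := by
      ext i
      refine Fin.addCases (fun i => ?_) (fun j => ?_) i
      · simp [J]
      · refine iff_of_false (fun h => hfar ⟨j, h⟩) ?_
        simp [Fin.ext_iff]
        omega
    have hJ : Odd J.card := by rwa [hIJ, card_map] at hI
    calc (4 : ℝ) ≤ ((∑ k, ∑ i, if (fun i => η (Fin.castAdd e i)) ⬝ᵥ gapTable i k =
            (if i ∈ J then 0 else 1) then 1 else 0 : ℕ) : ℝ) := by
          exact_mod_cast gapTable_los _ J hJ
      _ = ∑ k, ∑ i : Fin 3, losCoeff (fun _ => Set.univ) η I (Fin.castAdd m i)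
            (gapSample e m k (Fin.castAdd m i)) := by
          push_cast
          simp [losCoeff, gapSample, dotProduct_append_zero, J]
      _ ≤ _ := sum_le_sum fun k _ => by
          rw [Fin.sum_univ_add]
          exact le_add_of_nonneg_right (sum_nonneg fun j _ => losCoeff_nonneg)

noncomputable def separatingCoeff (S : Set (F2 d)) : Fin (3 + m) → F2 d → ℝ :=
  Fin.append ![fun ω => if ω ∈ S then 0 else 1, fun ω => -if ω = 0 then 1 else 0,
    fun ω => if ω ∈ S then 1 else 0] fun _ ω => if ω = 0 then 0 else 1

lemma sum_separatingCoeff_nonneg (S : Set (F2 d)) {ξ : Fin (3 + m) → F2 d} (hξ : ∑ i, ξ i = 0) :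
    0 ≤ ∑ i, separatingCoeff S i (ξ i) := by
  rw [Fin.sum_univ_add, Fin.sum_univ_three] at hξ ⊢
  simp only [separatingCoeff, Fin.append_left, Fin.append_right, Matrix.cons_val_zero,
    Matrix.cons_val_one, Matrix.cons_val_two, Matrix.head_cons, Matrix.tail_cons]
  set a := ξ (Fin.castAdd m 0)
  set c := ξ (Fin.castAdd m 2)
  by_cases hb : ξ (Fin.castAdd m 1) = 0
  · by_cases hξ' : ∀ j, ξ (Fin.natAdd 3 j) = 0
    · have hac : c = a := by
        simp only [hb, hξ', sum_const_zero, add_zero] at hξ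
        rw [← neg_eq_of_add_eq_zero_right hξ, ZModModule.neg_eq_self]
      rw [hac]
      split_ifs <;> norm_num [hξ']
    · obtain ⟨j, hj⟩ := not_forall.1 hξ'
      have : 1 ≤ ∑ j, (if ξ (Fin.natAdd 3 j) = 0 then 0 else 1 : ℝ) :=
        (if_neg hj).symm.le.trans (single_le_sum
          (f := fun j => if ξ (Fin.natAdd 3 j) = 0 then (0 : ℝ) else 1)
          (fun j _ => by positivity) (mem_univ j))
      split_ifs <;> linarith
  · simp only [hb, if_false, neg_zero, add_zero]
    positivity

lemma gapPoint_notMem_CTP : gapPoint e m ∉ CTP (fun _ => Set.univ) := by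
  set S : Set (F2 (3 + e)) := {ω | (fun i => ω (Fin.castAdd e i)) ∈ Set.range (gapTable 0)}
  have hrow : ∀ k, ∑ i, separatingCoeff S i (gapSample e m k i) =
      -if gapTable 1 k = 0 then 1 else 0 := fun k => by
    simp [separatingCoeff, gapSample, Fin.sum_univ_add, Fin.sum_univ_three, S,
      append_zero_eq_zero_iff, fun k' => gapTable_zero_ne_gapTable_two k' k]
  intro h
  have := CTP_subset_halfSpace (fun ξ hξ => sum_separatingCoeff_nonneg S hξ.2) h
  simp only [Set.mem_ofPred_eq, pairing_gapPoint, hrow] at this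
  rw [Fin.sum_univ_four, if_pos (by decide), if_pos (by decide), if_neg (by decide),
    if_neg (by decide)] at this
  norm_num at this

end Counterexample

/-- for `d ≥ 3`, `n ≥ 3`, the LOS inequalities do not suffice to describe
the full CTP. -/
theorem statement14 (d n : ℕ) (hd : 3 ≤ d) (hn : 3 ≤ n) :
    CTP (fun _ : Fin n => (Set.univ : Set (F2 d))) ⊂
      { x ∈ TP (fun _ : Fin n => (Set.univ : Set (F2 d))) |
        ∀ (η : F2 d), η ≠ 0 → ∀ I : Finset (Fin n), Odd I.card →
          1 ≤ losLHS (fun _ : Fin n => (Set.univ : Set (F2 d))) η I x } := by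
  obtain ⟨e, rfl⟩ := Nat.exists_eq_add_of_le hd
  obtain ⟨m, rfl⟩ := Nat.exists_eq_add_of_le hn
  refine (Set.ssubset_iff_of_subset fun x hx => ?_).2 ⟨gapPoint e m,
    ⟨gapPoint_mem_TP, fun η _ _ hI => one_le_losLHS_gapPoint η hI⟩, gapPoint_notMem_CTP⟩
  obtain ⟨hTP, hLOS⟩ := CTP_subset_LOS _ hx
  exact ⟨hTP, fun η _ I hI => hLOS η I hI⟩
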